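/- Let ℝⁿ carry the standard flat Euclidean metric with rectangular coordinates x¹, …, xⁿ. A smooth differential r-form ω on ℝⁿ is a co-closed conformal Killing r-form if and only if its components have the form ω_{i₁i₂…i_r} = A_{k i₁i₂…i_r} x^k + B_{i₁i₂…i_r}, where A is a constant skew-symmetric tensor of order r+1 and B is a constant skew-symmetric tensor of order r (summation over k = 1, …, n). -/

import Mathlib

/-!
**Statement 13.**  `ℝⁿ` carries the standard flat Euclidean metric with
rectangular coordinates.  A smooth differential `r`-form `ω` on `ℝⁿ`
(`r = s+1 ≥ 1`), given as a field `x ↦ ω x` of alternating `r`-linear forms,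
is a co-closed conformal Killing `r`-form iff its components have the form
`ω_{i₁…i_r} = A_{k i₁…i_r} x^k + B_{i₁…i_r}` for constant skew-symmetric
tensors `A` (of order `r+1`) and `B` (of order `r`); i.e.
`ω x = ι_x A + B`, that is, `ω x v = A (x, v₁, …, v_r) + B (v₁, …, v_r)`.

On flat `ℝⁿ` the Levi-Civita covariant derivative is the ordinary
derivative of the components, the exterior derivative is
`(dω)(w₀,…,w_r) = Σᵢ (-1)ⁱ (∂_{wᵢ} ω)(w₀,…,ŵᵢ,…,w_r)`, and the
codifferential is `(d*ω)_{i₂…i_r} = -Σ_k ∂_k ω_{k i₂…i_r}`.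
-/

noncomputable section

open scoped BigOperators

/-- the value at `x` of the exterior derivative `dω` of the `s`-form `ω`,
evaluated on `s+1` vectors -/
def extDerivAt {n s : ℕ}
    (ω : EuclideanSpace ℝ (Fin n) → (EuclideanSpace ℝ (Fin n) [⋀^Fin s]→ₗ[ℝ] ℝ))
    (x : EuclideanSpace ℝ (Fin n)) (w : Fin (s + 1) → EuclideanSpace ℝ (Fin n)) : ℝ :=
  ∑ i : Fin (s + 1),
    (-1 : ℝ) ^ (i : ℕ) * fderiv ℝ (fun y => ω y (fun j => w (i.succAbove j))) x (w i)

/-- the value at `x` of the codifferential `d*ω` of the `(s+1)`-form `ω`,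
evaluated on `s` vectors: `(d*ω)_{i₂…i_r} = -Σ_k ∂_k ω_{k i₂…i_r}` -/
def codiffAt {n s : ℕ}
    (ω : EuclideanSpace ℝ (Fin n) → (EuclideanSpace ℝ (Fin n) [⋀^Fin (s + 1)]→ₗ[ℝ] ℝ))
    (x : EuclideanSpace ℝ (Fin n)) (v : Fin s → EuclideanSpace ℝ (Fin n)) : ℝ :=
  - ∑ k : Fin n,
      fderiv ℝ (fun y => ω y (Fin.cons (EuclideanSpace.single k 1) v)) x
        (EuclideanSpace.single k 1)

/-- the value of `u♭ ∧ β` on `s+1` vectors, for `β` an `s`-linear form and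
`u♭` the Euclidean metric dual of `u` -/
def flatWedgeAt {n s : ℕ} (u : EuclideanSpace ℝ (Fin n))
    (β : (Fin s → EuclideanSpace ℝ (Fin n)) → ℝ)
    (v : Fin (s + 1) → EuclideanSpace ℝ (Fin n)) : ℝ :=
  ∑ i : Fin (s + 1), (-1 : ℝ) ^ (i : ℕ) * (inner ℝ u (v i) : ℝ) * β (fun j => v (i.succAbove j))

/-- `ω` is a conformal Killing form of degree `r = s+1` on flat `ℝⁿ`:
for every (constant) vector field `u`,
`∇_u ω = (1/(r+1)) ι_u (dω) - (1/(n-r+1)) u♭ ∧ d*ω`. -/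
def IsConformalKillingEuc (n : ℕ) {s : ℕ}
    (ω : EuclideanSpace ℝ (Fin n) → (EuclideanSpace ℝ (Fin n) [⋀^Fin (s + 1)]→ₗ[ℝ] ℝ)) :
    Prop :=
  ∀ (x u : EuclideanSpace ℝ (Fin n)) (v : Fin (s + 1) → EuclideanSpace ℝ (Fin n)),
    fderiv ℝ (fun y => ω y v) x u
      = (((s : ℝ) + 1) + 1)⁻¹ * extDerivAt ω x (Fin.cons u v)
        - ((n : ℝ) - ((s : ℝ) + 1) + 1)⁻¹ * flatWedgeAt u (codiffAt ω x) v

/-- `ω` is co-closed: `d*ω = 0`. -/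
def IsCoclosedEuc (n : ℕ) {s : ℕ}
    (ω : EuclideanSpace ℝ (Fin n) → (EuclideanSpace ℝ (Fin n) [⋀^Fin (s + 1)]→ₗ[ℝ] ℝ)) :
    Prop :=
  ∀ (x : EuclideanSpace ℝ (Fin n)) (v : Fin s → EuclideanSpace ℝ (Fin n)),
    codiffAt ω x v = 0

namespace CK13
variable {n s : ℕ}
  {ω : EuclideanSpace ℝ (Fin n) → (EuclideanSpace ℝ (Fin n) [⋀^Fin (s+1)]→ₗ[ℝ] ℝ)}

theorem key (hCK : IsConformalKillingEuc n ω) (hCC : IsCoclosedEuc n ω)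
    (x u : EuclideanSpace ℝ (Fin n)) (v : Fin (s+1) → EuclideanSpace ℝ (Fin n)) :
    ((s:ℝ)+1) * fderiv ℝ (fun y => ω y v) x u
      = ∑ j : Fin (s+1), (-1:ℝ)^((j:ℕ)+1) *
          fderiv ℝ (fun y => ω y (Fin.cons u (fun m => v (j.succAbove m)))) x (v j) := by
  have h := hCK x u v
  have hfw : flatWedgeAt u (codiffAt ω x) v = 0 := by
    unfold flatWedgeAt; simp [hCC x]
  rw [hfw, mul_zero, sub_zero] at h
  have hext : extDerivAt ω x (Fin.cons u v)
      = fderiv ℝ (fun y => ω y v) x u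
        + ∑ j : Fin (s+1), (-1:ℝ)^((j:ℕ)+1) *
            fderiv ℝ (fun y => ω y (Fin.cons u (fun m => v (j.succAbove m)))) x (v j) := by
    unfold extDerivAt
    rw [Fin.sum_univ_succ]
    congr 1
    · simp [Fin.zero_succAbove]
    · refine Finset.sum_congr rfl (fun j _ => ?_)
      have htup : (fun m => (Fin.cons u v : Fin (s+2) → EuclideanSpace ℝ (Fin n))
            (j.succ.succAbove m)) = Fin.cons u (fun m => v (j.succAbove m)) := by
        funext m
        refine Fin.cases ?_ (fun l => ?_) m
        · rw [Fin.succ_succAbove_zero]; simp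
        · rw [Fin.succ_succAbove_succ]; simp
      rw [htup, Fin.val_succ, Fin.cons_succ]
  rw [hext] at h
  have hs2 : (((s:ℝ)+1)+1) ≠ 0 := by positivity
  have h2 := congrArg (fun z => (((s:ℝ)+1)+1) * z) h
  simp only [mul_inv_cancel_left₀ hs2] at h2
  linarith [h2]

theorem cons_cons_swap {α : Type*} {m : ℕ} (a b : α) (t : Fin m → α) :
    (Fin.cons b (Fin.cons a t) : Fin (m+2) → α) ∘ ⇑(Equiv.swap (0 : Fin (m+2)) 1)
      = Fin.cons a (Fin.cons b t) := by
  funext j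
  refine Fin.cases ?_ (fun k => ?_) j
  · rw [Function.comp_apply, Equiv.swap_apply_left]
    rw [show (1 : Fin (m+2)) = (0 : Fin (m+1)).succ from rfl]
    simp
  · refine Fin.cases ?_ (fun l => ?_) k
    · rw [Function.comp_apply, show ((0:Fin (m+1)).succ : Fin (m+2)) = 1 from rfl,
        Equiv.swap_apply_right]
      simp
    · have h1 : (l.succ.succ : Fin (m+2)) ≠ 0 := Fin.succ_ne_zero _
      have h2 : (l.succ.succ : Fin (m+2)) ≠ 1 := by
        rw [show (1 : Fin (m+2)) = (0 : Fin (m+1)).succ from rfl]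
        exact fun h => Fin.succ_ne_zero l (Fin.succ_injective _ h)
      rw [Function.comp_apply, Equiv.swap_apply_of_ne_of_ne h1 h2]
      simp [Fin.cons_succ]

theorem fd_swap01 {m : ℕ}
    (ω : EuclideanSpace ℝ (Fin n) → (EuclideanSpace ℝ (Fin n) [⋀^Fin (m+2)]→ₗ[ℝ] ℝ))
    (a b : EuclideanSpace ℝ (Fin n)) (t : Fin m → EuclideanSpace ℝ (Fin n))
    (x : EuclideanSpace ℝ (Fin n)) :
    fderiv ℝ (fun y => ω y (Fin.cons a (Fin.cons b t))) x
      = - fderiv ℝ (fun y => ω y (Fin.cons b (Fin.cons a t))) x := by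
  have h01 : (0 : Fin (m+2)) ≠ 1 := by
    rw [show (1 : Fin (m+2)) = (0 : Fin (m+1)).succ from rfl]
    exact (Fin.succ_ne_zero _).symm
  have hpt : (fun y => ω y (Fin.cons a (Fin.cons b t)))
      = fun y => -(ω y (Fin.cons b (Fin.cons a t))) := by
    funext y
    conv_lhs => rw [← cons_cons_swap a b t]
    rw [AlternatingMap.map_swap _ _ h01]
  rw [hpt, fderiv_fun_neg]

theorem fd_cancel (x d u a : EuclideanSpace ℝ (Fin n)) (w : Fin s → EuclideanSpace ℝ (Fin n))
    (k : Fin s) :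
    fderiv ℝ (fun y => ω y (Fin.cons u
        (fun m => (Fin.cons a w : Fin (s+1) → EuclideanSpace ℝ (Fin n)) (k.succ.succAbove m)))) x d
    + fderiv ℝ (fun y => ω y (Fin.cons a
        (fun m => (Fin.cons u w : Fin (s+1) → EuclideanSpace ℝ (Fin n)) (k.succ.succAbove m)))) x d
      = 0 := by
  obtain ⟨s', rfl⟩ : ∃ s', s = s' + 1 :=
    ⟨s - 1, by have : s ≠ 0 := by rintro rfl; exact k.elim0
               omega⟩
  have htup : ∀ (c : EuclideanSpace ℝ (Fin n)),
      (fun m => (Fin.cons c w : Fin (s'+2) → EuclideanSpace ℝ (Fin n)) (k.succ.succAbove m))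
        = Fin.cons c (fun l => w (k.succAbove l)) := by
    intro c; funext m
    refine Fin.cases ?_ (fun l => ?_) m
    · rw [Fin.succ_succAbove_zero]; simp
    · rw [Fin.succ_succAbove_succ]; simp
  rw [htup a, htup u, fd_swap01 ω u a (fun l => w (k.succAbove l)) x]
  simp

theorem antisym (hCK : IsConformalKillingEuc n ω) (hCC : IsCoclosedEuc n ω)
    (x u a : EuclideanSpace ℝ (Fin n)) (w : Fin s → EuclideanSpace ℝ (Fin n)) :
    fderiv ℝ (fun y => ω y (Fin.cons a w)) x u
      + fderiv ℝ (fun y => ω y (Fin.cons u w)) x a = 0 := by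
  have h1 := key hCK hCC x u (Fin.cons a w)
  have h2 := key hCK hCC x a (Fin.cons u w)
  rw [Fin.sum_univ_succ] at h1 h2
  simp only [Fin.val_zero, zero_add, pow_one, Fin.cons_zero, Fin.zero_succAbove,
    Fin.cons_succ, Fin.val_succ, neg_mul, one_mul] at h1 h2
  have hsum : (∑ k : Fin s, (-1:ℝ) ^ ((k:ℕ) + 1 + 1) *
        (fderiv ℝ (fun y => (ω y) (Fin.cons u fun m => (Fin.cons a w : Fin (s+1) → EuclideanSpace ℝ (Fin n)) (k.succ.succAbove m))) x) (w k))
      + (∑ k : Fin s, (-1:ℝ) ^ ((k:ℕ) + 1 + 1) *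
        (fderiv ℝ (fun y => (ω y) (Fin.cons a fun m => (Fin.cons u w : Fin (s+1) → EuclideanSpace ℝ (Fin n)) (k.succ.succAbove m))) x) (w k))
      = 0 := by
    rw [← Finset.sum_add_distrib]
    refine Finset.sum_eq_zero (fun k _ => ?_)
    rw [← mul_add, fd_cancel x (w k) u a w k, mul_zero]
  have hs2 : ((s:ℝ)+2) ≠ 0 := by positivity
  have h4 : ((s:ℝ)+2) * ((fderiv ℝ (fun y => ω y (Fin.cons a w)) x) u
      + (fderiv ℝ (fun y => ω y (Fin.cons u w)) x) a) = 0 := by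
    linear_combination h1 + h2 + hsum
  exact (mul_eq_zero.mp h4).resolve_left hs2

/-- moving the `i`-th entry to the front costs a sign `(-1)^i` -/
theorem map_cons_succAbove {m : ℕ} (f : EuclideanSpace ℝ (Fin n) [⋀^Fin (m+1)]→ₗ[ℝ] ℝ)
    (v : Fin (m+1) → EuclideanSpace ℝ (Fin n)) (i : Fin (m+1)) :
    f (Fin.cons (v i) (fun j => v (i.succAbove j))) = (-1:ℝ)^(i:ℕ) * f v := by
  have hperm : (Fin.cons (v i) (fun j => v (i.succAbove j)) : Fin (m+1) → EuclideanSpace ℝ (Fin n))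
      = v ∘ ⇑(i.cycleRange⁻¹) := by
    funext j
    refine Fin.cases ?_ (fun k => ?_) j
    · have h0 : (i.cycleRange)⁻¹ 0 = i := by
        rw [Equiv.Perm.inv_eq_iff_eq, Fin.cycleRange_self]
      simp [h0]
    · have hk : (i.cycleRange)⁻¹ k.succ = i.succAbove k := by
        rw [Equiv.Perm.inv_eq_iff_eq, Fin.cycleRange_succAbove]
      simp [hk]
  rw [hperm, AlternatingMap.map_perm, Equiv.Perm.sign_inv, Fin.sign_cycleRange]
  rw [Units.smul_def]
  push_cast
  rw [zsmul_eq_mul]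
  push_cast
  ring

theorem fd_moveFront (hω : ∀ v : Fin (s + 1) → EuclideanSpace ℝ (Fin n),
      ContDiff ℝ (⊤ : ℕ∞) fun x => ω x v)
    (v : Fin (s+1) → EuclideanSpace ℝ (Fin n)) (i : Fin (s+1)) (x d : EuclideanSpace ℝ (Fin n)) :
    fderiv ℝ (fun y => ω y (Fin.cons (v i) (fun j => v (i.succAbove j)))) x d
      = (-1:ℝ)^(i:ℕ) * fderiv ℝ (fun y => ω y v) x d := by
  have hpt : (fun y => ω y (Fin.cons (v i) (fun j => v (i.succAbove j))))
      = fun y => (-1:ℝ)^(i:ℕ) * ω y v := by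
    funext y; exact map_cons_succAbove (ω y) v i
  rw [hpt, fderiv_const_mul (((hω v).differentiable (by simp)).differentiableAt)]
  simp

theorem Talt (hω : ∀ v : Fin (s + 1) → EuclideanSpace ℝ (Fin n),
      ContDiff ℝ (⊤ : ℕ∞) fun x => ω x v)
    (hCK : IsConformalKillingEuc n ω) (hCC : IsCoclosedEuc n ω)
    (x u : EuclideanSpace ℝ (Fin n)) (v : Fin (s+1) → EuclideanSpace ℝ (Fin n)) (k : Fin (s+1))
    (hk : v k = u) :
    fderiv ℝ (fun y => ω y v) x u = 0 := by
  have hmf := fd_moveFront hω v k x u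
  rw [hk] at hmf
  have h0 := antisym hCK hCC x u u (fun j => v (k.succAbove j))
  have hz : fderiv ℝ (fun y => ω y (Fin.cons u (fun j => v (k.succAbove j)))) x u = 0 := by
    linarith
  rw [hz] at hmf
  have : ((-1:ℝ)^(k:ℕ)) ≠ 0 := by
    simp
  field_simp at hmf
  exact (mul_eq_zero.mp hmf.symm).resolve_left this

theorem fd_zero_of_eq (v : Fin (s+1) → EuclideanSpace ℝ (Fin n)) {i j : Fin (s+1)}
    (hv : v i = v j) (hij : i ≠ j) (x : EuclideanSpace ℝ (Fin n)) :
    fderiv ℝ (fun y => ω y v) x = 0 := by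
  have hpt : (fun y => ω y v) = fun _ => (0:ℝ) := by
    funext y; exact AlternatingMap.map_eq_zero_of_eq _ v hv hij
  rw [hpt, fderiv_fun_const]
  rfl

theorem Tconst (hω : ∀ v : Fin (s + 1) → EuclideanSpace ℝ (Fin n),
      ContDiff ℝ (⊤ : ℕ∞) fun x => ω x v)
    (hCK : IsConformalKillingEuc n ω) (hCC : IsCoclosedEuc n ω)
    (x : EuclideanSpace ℝ (Fin n)) (v : Fin (s+1) → EuclideanSpace ℝ (Fin n))
    (u' : EuclideanSpace ℝ (Fin n)) :
    fderiv ℝ (fun y => ω y v) x u' = fderiv ℝ (fun y => ω y v) 0 u' := by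
  -- derivative of the first derivative in any direction vanishes
  have hf'smooth : ∀ (w : Fin (s+1) → EuclideanSpace ℝ (Fin n)),
      Differentiable ℝ (fderiv ℝ (fun z => ω z w)) := fun w =>
    ((hω w).fderiv_right (m := (⊤ : ℕ∞)) (by simp)).differentiable (by simp)
  have hgdiff : ∀ (w : Fin (s+1) → EuclideanSpace ℝ (Fin n)) (e : EuclideanSpace ℝ (Fin n)),
      Differentiable ℝ (fun y => fderiv ℝ (fun z => ω z w) y e) := by
    intro w e
    exact (ContinuousLinearMap.apply ℝ ℝ e).differentiable.comp (hf'smooth w)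
  have heval : ∀ (w : Fin (s+1) → EuclideanSpace ℝ (Fin n)) (e : EuclideanSpace ℝ (Fin n))
      (z : EuclideanSpace ℝ (Fin n)),
      fderiv ℝ (fun y => fderiv ℝ (fun z' => ω z' w) y e) z
        = (fderiv ℝ (fderiv ℝ (fun z' => ω z' w)) z).flip e := by
    intro w e z
    have h := fderiv_clm_apply (x := z) (c := fderiv ℝ (fun z' => ω z' w)) (u := fun _ => e)
      ((hf'smooth w).differentiableAt) (differentiableAt_const e)
    simpa using h
  -- symmetry of the second derivative
  have hsym : ∀ (w : Fin (s+1) → EuclideanSpace ℝ (Fin n)) (b c z : EuclideanSpace ℝ (Fin n)),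
      fderiv ℝ (fun y => fderiv ℝ (fun z' => ω z' w) y c) z b
        = fderiv ℝ (fun y => fderiv ℝ (fun z' => ω z' w) y b) z c := by
    intro w b c z
    rw [heval, heval]
    exact second_derivative_symmetric
      (f := fun z' => ω z' w) (f' := fderiv ℝ (fun z' => ω z' w))
      (fun y => (((hω w).differentiable (by simp)).differentiableAt).hasFDerivAt)
      (((hf'smooth w).differentiableAt).hasFDerivAt) b c
  -- antisymmetry coming from the Killing equation
  have hanti : ∀ (b c z e : EuclideanSpace ℝ (Fin n)) (t : Fin s → EuclideanSpace ℝ (Fin n)),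
      fderiv ℝ (fun y => fderiv ℝ (fun z' => ω z' (Fin.cons c t)) y b) z e
        = - fderiv ℝ (fun y => fderiv ℝ (fun z' => ω z' (Fin.cons b t)) y c) z e := by
    intro b c z e t
    have hpt : (fun y => fderiv ℝ (fun z' => ω z' (Fin.cons c t)) y b)
        = fun y => -(fderiv ℝ (fun z' => ω z' (Fin.cons b t)) y c) := by
      funext y
      have := antisym hCK hCC y b c t
      linarith
    rw [hpt, fderiv_fun_neg]
    simp
  -- braid argument: all second derivatives vanish
  have hD0 : ∀ (z e : EuclideanSpace ℝ (Fin n)),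
      fderiv ℝ (fun y => fderiv ℝ (fun z' => ω z' v) y u') z e = 0 := by
    intro z e
    have hv' : v = Fin.cons (v 0) (Fin.tail v) := (Fin.cons_self_tail v).symm
    rw [hv']
    set t := Fin.tail v
    set a := e; set b := u'; set c := v 0
    have h1 : fderiv ℝ (fun y => fderiv ℝ (fun z' => ω z' (Fin.cons c t)) y b) z a
        = fderiv ℝ (fun y => fderiv ℝ (fun z' => ω z' (Fin.cons c t)) y a) z b :=
      hsym (Fin.cons c t) a b z
    have h2 : fderiv ℝ (fun y => fderiv ℝ (fun z' => ω z' (Fin.cons c t)) y a) z b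
        = - fderiv ℝ (fun y => fderiv ℝ (fun z' => ω z' (Fin.cons a t)) y c) z b :=
      hanti a c z b t
    have h3 : fderiv ℝ (fun y => fderiv ℝ (fun z' => ω z' (Fin.cons a t)) y c) z b
        = fderiv ℝ (fun y => fderiv ℝ (fun z' => ω z' (Fin.cons a t)) y b) z c :=
      hsym (Fin.cons a t) b c z
    have h4 : fderiv ℝ (fun y => fderiv ℝ (fun z' => ω z' (Fin.cons a t)) y b) z c
        = - fderiv ℝ (fun y => fderiv ℝ (fun z' => ω z' (Fin.cons b t)) y a) z c :=
      hanti b a z c t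
    have h5 : fderiv ℝ (fun y => fderiv ℝ (fun z' => ω z' (Fin.cons b t)) y a) z c
        = fderiv ℝ (fun y => fderiv ℝ (fun z' => ω z' (Fin.cons b t)) y c) z a :=
      hsym (Fin.cons b t) c a z
    have h6 : fderiv ℝ (fun y => fderiv ℝ (fun z' => ω z' (Fin.cons b t)) y c) z a
        = - fderiv ℝ (fun y => fderiv ℝ (fun z' => ω z' (Fin.cons c t)) y b) z a :=
      hanti c b z a t
    linarith
  -- hence the first derivative is constant
  have hconst := is_const_of_fderiv_eq_zero (f := fun y => fderiv ℝ (fun z => ω z v) y u')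
    (hgdiff v u') ?_ x 0
  · exact hconst
  · intro z
    ext e
    simpa using hD0 z e

theorem affine (hω : ∀ v : Fin (s + 1) → EuclideanSpace ℝ (Fin n),
      ContDiff ℝ (⊤ : ℕ∞) fun x => ω x v)
    (hCK : IsConformalKillingEuc n ω) (hCC : IsCoclosedEuc n ω)
    (x : EuclideanSpace ℝ (Fin n)) (v : Fin (s+1) → EuclideanSpace ℝ (Fin n)) :
    ω x v = ω 0 v + fderiv ℝ (fun y => ω y v) 0 x := by
  set L := fderiv ℝ (fun y => ω y v) 0 with hL
  have hdiff : Differentiable ℝ (fun y => ω y v) := (hω v).differentiable (by simp)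
  have hφ' : ∀ z, fderiv ℝ (fun y => ω y v - L y) z = 0 := by
    intro z
    rw [fderiv_fun_sub (hdiff z) (L.differentiableAt)]
    have h2 : fderiv ℝ (fun y => L y) z = L := L.fderiv
    rw [h2]
    ext e
    simp [Tconst hω hCK hCC z v e, ← hL]
  have hc := is_const_of_fderiv_eq_zero (f := fun y => ω y v - L y)
    (hdiff.sub L.differentiable) hφ' x 0
  simp only [map_zero, sub_zero] at hc
  linarith [hc]

theorem forward (hω : ∀ v : Fin (s + 1) → EuclideanSpace ℝ (Fin n),
      ContDiff ℝ (⊤ : ℕ∞) fun x => ω x v)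
    (hCK : IsConformalKillingEuc n ω) (hCC : IsCoclosedEuc n ω) :
    ∃ (A : EuclideanSpace ℝ (Fin n) [⋀^Fin (s + 2)]→ₗ[ℝ] ℝ)
      (B : EuclideanSpace ℝ (Fin n) [⋀^Fin (s + 1)]→ₗ[ℝ] ℝ),
      ∀ (x : EuclideanSpace ℝ (Fin n)) (v : Fin (s + 1) → EuclideanSpace ℝ (Fin n)),
        ω x v = A (Fin.cons x v) + B v := by
  classical
  have hdiff : ∀ (v : Fin (s+1) → EuclideanSpace ℝ (Fin n)) (x : EuclideanSpace ℝ (Fin n)),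
      DifferentiableAt ℝ (fun y => ω y v) x :=
    fun v x => ((hω v).differentiable (by simp)).differentiableAt
  refine ⟨⟨⟨fun w => fderiv ℝ (fun y => ω y (Fin.tail w)) 0 (w 0), ?_, ?_⟩, ?_⟩, ω 0, ?_⟩
  · intro dec w i a b
    have hde : dec = instDecidableEqFin _ := Subsingleton.elim _ _
    subst hde
    refine Fin.cases ?_ (fun j => ?_) i
    · beta_reduce
      rw [Fin.tail_update_zero, Fin.tail_update_zero, Fin.tail_update_zero]
      simp
    · have h0 : ∀ z : EuclideanSpace ℝ (Fin n),
          (Function.update w j.succ z) 0 = w 0 :=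
        fun z => Function.update_of_ne (Fin.succ_ne_zero j).symm _ _
      beta_reduce
      rw [h0, h0, h0, Fin.tail_update_succ, Fin.tail_update_succ, Fin.tail_update_succ]
      have hpt : (fun y => ω y (Function.update (Fin.tail w) j (a + b)))
          = fun y => ω y (Function.update (Fin.tail w) j a)
              + ω y (Function.update (Fin.tail w) j b) := by
        funext y
        exact AlternatingMap.map_update_add (ω y) (Fin.tail w) j a b
      rw [hpt, fderiv_fun_add (hdiff _ _) (hdiff _ _)]
      simp
  · intro dec w i c a
    have hde : dec = instDecidableEqFin _ := Subsingleton.elim _ _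
    subst hde
    refine Fin.cases ?_ (fun j => ?_) i
    · beta_reduce
      rw [Fin.tail_update_zero, Fin.tail_update_zero]
      simp
    · have h0 : ∀ z : EuclideanSpace ℝ (Fin n),
          (Function.update w j.succ z) 0 = w 0 :=
        fun z => Function.update_of_ne (Fin.succ_ne_zero j).symm _ _
      beta_reduce
      rw [h0, h0, Fin.tail_update_succ, Fin.tail_update_succ]
      have hpt : (fun y => ω y (Function.update (Fin.tail w) j (c • a)))
          = fun y => c • ω y (Function.update (Fin.tail w) j a) := by
        funext y
        exact AlternatingMap.map_update_smul (ω y) (Fin.tail w) j c a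
      rw [hpt, fderiv_fun_const_smul (hdiff _ _)]
      simp
  · intro w i j hv hij
    induction i using Fin.cases with
    | zero =>
      induction j using Fin.cases with
      | zero => exact absurd rfl hij
      | succ j' =>
        exact Talt hω hCK hCC 0 (w 0) (Fin.tail w) j' (show Fin.tail w j' = w 0 from hv.symm)
    | succ i' =>
      induction j using Fin.cases with
      | zero =>
        exact Talt hω hCK hCC 0 (w 0) (Fin.tail w) i' (show Fin.tail w i' = w 0 from hv)
      | succ j' =>
        have hne : i' ≠ j' := fun hh => hij (by rw [hh])
        have hz := fd_zero_of_eq (ω := ω) (Fin.tail w)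
          (show Fin.tail w i' = Fin.tail w j' from hv) hne 0
        show (fderiv ℝ (fun y => ω y (Fin.tail w)) 0) (w 0) = 0
        rw [hz]
        simp
  · intro x v
    have h := affine hω hCK hCC x v
    simpa [Fin.tail_cons] using (by linarith [h] :
      ω x v = fderiv ℝ (fun y => ω y v) 0 x + ω 0 v)

theorem backward (A : EuclideanSpace ℝ (Fin n) [⋀^Fin (s + 2)]→ₗ[ℝ] ℝ)
    (B : EuclideanSpace ℝ (Fin n) [⋀^Fin (s + 1)]→ₗ[ℝ] ℝ)
    (h : ∀ (x : EuclideanSpace ℝ (Fin n)) (v : Fin (s + 1) → EuclideanSpace ℝ (Fin n)),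
      ω x v = A (Fin.cons x v) + B v) :
    IsConformalKillingEuc n ω ∧ IsCoclosedEuc n ω := by
  classical
  have h01 : (0 : Fin (s+2)) ≠ 1 := by
    rw [show (1 : Fin (s+2)) = (0 : Fin (s+1)).succ from rfl]
    exact (Fin.succ_ne_zero _).symm
  have hT : ∀ (x u : EuclideanSpace ℝ (Fin n)) (v : Fin (s+1) → EuclideanSpace ℝ (Fin n)),
      fderiv ℝ (fun y => ω y v) x u = A (Fin.cons u v) := by
    intro x u v
    let L : EuclideanSpace ℝ (Fin n) →ₗ[ℝ] ℝ :=
      { toFun := fun y => A (Fin.cons y v)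
        map_add' := fun y z => by
          have := A.map_update_add (Fin.cons 0 v) 0 y z
          simpa [Fin.update_cons_zero] using this
        map_smul' := fun c y => by
          have := A.map_update_smul (Fin.cons 0 v) 0 c y
          simpa [Fin.update_cons_zero] using this }
    have hfun : (fun y => ω y v) = fun y => (LinearMap.toContinuousLinearMap L) y + B v := by
      funext y
      rw [h y v]
      simp [LinearMap.coe_toContinuousLinearMap', L]
    rw [hfun, fderiv_add_const, (LinearMap.toContinuousLinearMap L).fderiv]
    simp [LinearMap.coe_toContinuousLinearMap', L]
  have hCC : IsCoclosedEuc n ω := by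
    intro x v
    have hz : ∀ k : Fin n,
        A (Fin.cons (EuclideanSpace.single k 1) (Fin.cons (EuclideanSpace.single k 1) v)) = 0 := by
      intro k
      refine AlternatingMap.map_eq_zero_of_eq A _ (i := 0) (j := 1) ?_ h01
      rw [show (1 : Fin (s+2)) = (0 : Fin (s+1)).succ from rfl]
      simp
    unfold codiffAt
    simp [hT, hz]
  refine ⟨?_, hCC⟩
  intro x u v
  have hfw : flatWedgeAt u (codiffAt ω x) v = 0 := by
    unfold flatWedgeAt; simp [hCC x]
  have hterm : ∀ i : Fin (s+2),
      (-1:ℝ)^(i:ℕ) * fderiv ℝ (fun y => ω y (fun j => (Fin.cons u v : Fin (s+2) → EuclideanSpace ℝ (Fin n)) (i.succAbove j))) x ((Fin.cons u v : Fin (s+2) → EuclideanSpace ℝ (Fin n)) i)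
        = A (Fin.cons u v) := by
    intro i
    rw [hT, map_cons_succAbove A (Fin.cons u v) i, ← mul_assoc, ← mul_pow]
    norm_num
  have hext : extDerivAt ω x (Fin.cons u v) = ((s:ℝ)+2) * A (Fin.cons u v) := by
    unfold extDerivAt
    rw [Finset.sum_congr rfl (fun i _ => hterm i), Finset.sum_const, Finset.card_univ,
      Fintype.card_fin, nsmul_eq_mul]
    push_cast; ring
  rw [hT, hfw, hext, mul_zero, sub_zero]
  have hs2 : (((s:ℝ)+1)+1) ≠ 0 := by positivity
  field_simp
  ring

end CK13

/-- A smooth differential `r`-form (`r = s+1`) on flat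
`ℝⁿ` is a co-closed conformal Killing `r`-form iff its components have the
form `ω_{i₁…i_r} = A_{k i₁…i_r} x^k + B_{i₁…i_r}` with `A` a constant
skew-symmetric tensor of order `r+1` and `B` a constant skew-symmetric
tensor of order `r`. -/
theorem euclidean_coclosed_conformalKilling_iff_affine
    {n s : ℕ}
    (ω : EuclideanSpace ℝ (Fin n) → (EuclideanSpace ℝ (Fin n) [⋀^Fin (s + 1)]→ₗ[ℝ] ℝ))
    (hω : ∀ v : Fin (s + 1) → EuclideanSpace ℝ (Fin n), ContDiff ℝ (⊤ : ℕ∞) fun x => ω x v) :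
    (IsConformalKillingEuc n ω ∧ IsCoclosedEuc n ω)
      ↔ ∃ (A : EuclideanSpace ℝ (Fin n) [⋀^Fin (s + 2)]→ₗ[ℝ] ℝ)
          (B : EuclideanSpace ℝ (Fin n) [⋀^Fin (s + 1)]→ₗ[ℝ] ℝ),
          ∀ (x : EuclideanSpace ℝ (Fin n)) (v : Fin (s + 1) → EuclideanSpace ℝ (Fin n)),
            ω x v = A (Fin.cons x v) + B v := by
  constructor
  · rintro ⟨hCK, hCC⟩
    exact CK13.forward hω hCK hCC
  · rintro ⟨A, B, h⟩
    exact CK13.backward A B h
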